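/- Let the cell averages in the three-cell stencil lie exactly on the stationary solution: Q_j^n = Q^E(r_j) for j ∈ {i−1, i, i+1}. Then the second-order well balanced reconstruction q_i^n(r,t) = Q^E(r) + Q_i^{f,n} + (ΔQ_i^{f,n}/Δr)(r − r_i) + ∂tQ_i^n·(t − t^n) reproduces the stationary solution exactly: (i) the fluctuations Q_j^{f,n} = Q_j^n − Q^E(r_j) vanish for j = i−1, i, i+1, hence the limited slope ΔQ_i^{f,n} = minmod(Q_i^{f,n} − Q_{i−1}^{f,n}, Q_{i+1}^{f,n} − Q_i^{f,n}) is zero; (ii) the discrete time derivative ∂tQ_i^n = −( f(q^{n,-}_{i+1/2}) − f(q^{n,+}_{i−1/2}) )/Δr − B_i/Δr, evaluated with the boundary-extrapolated values of the reconstruction, vanishes, because the boundary-extrapolated values equal the equilibrium values (so u = 0 makes the flux differences zero, and all fluctuation terms in B_i = (0, b₂^i, b₃^i, b₄^i, 0) with b₂^i = r_i(P^{f,-}_{i+1/2} − P^{f,+}_{i−1/2}) + r_iρ^E_i(ζ_r^f)_i + r_iρ^f_i(ζ_r)_i, b₃^i = ρ_i u_i v_i, b₄^i = ρ_i u_i G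 m_s/r_i vanish). Consequently q_i^n(r,t) = Q^E(r) for all r in cell I_i and all t. -/

import Mathlib

/-! Second-order well balanced MUSCL reconstruction for the one-dimensional
cylindrical Euler system with gravity.  Conserved states are
`q = (rρ, rρu, rρv, rρE, r) ∈ ℝ⁵`. -/

/-- Pressure of a conserved state vector. -/
noncomputable def presQ (γ : ℝ) (q : Fin 5 → ℝ) : ℝ :=
  (γ - 1) * (q 0 / q 4) * (q 3 / q 0 - ((q 1 / q 0) ^ 2 + (q 2 / q 0) ^ 2) / 2)

/-- Flux `f(q) = (rρu, rρu², rρuv, ru(ρE+P), 0)` of a conserved state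
vector. -/
noncomputable def fQ (γ : ℝ) (q : Fin 5 → ℝ) : Fin 5 → ℝ :=
  ![q 1, q 1 * (q 1 / q 0), q 1 * (q 2 / q 0),
    q 4 * (q 1 / q 0) * ((q 0 / q 4) * (q 3 / q 0) + presQ γ q), 0]

/-- Conserved vector of the prescribed stationary solution at radius `r`. -/
def QE (ρE vE EE : ℝ → ℝ) (r : ℝ) : Fin 5 → ℝ :=
  ![r * ρE r, 0, r * ρE r * vE r, r * ρE r * EE r, r]

/-- Equilibrium pressure `P^E(r)`. -/
noncomputable def presE (γ : ℝ) (ρE vE EE : ℝ → ℝ) (r : ℝ) : ℝ :=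
  (γ - 1) * ρE r * (EE r - (vE r) ^ 2 / 2)

/-- minmod limiter: `0` if `ab ≤ 0`, `a` if `|a| < |b|`, else `b`. -/
noncomputable def minmod (x y : ℝ) : ℝ :=
  if x * y ≤ 0 then 0 else if |x| < |y| then x else y

/-! At an equilibrium stencil the fluctuations `Q - Q^E` vanish identically, so the
minmod slope is zero and the reconstruction collapses to `Q^E` itself. The
boundary-extrapolated states are then equilibrium states: their flux vanishes because
`u^E = 0`, their pressure is `P^E`, so every fluctuation term of the source `B_i` is zero,
and hence so is the discrete time derivative. -/

theorem minmod_zero_left (y : ℝ) : minmod 0 y = 0 := by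
  simp [minmod]

section Equilibrium

variable (ρE vE EE : ℝ → ℝ) {r : ℝ}

theorem QE_density (hr : r ≠ 0) : QE ρE vE EE r 0 / QE ρE vE EE r 4 = ρE r := by
  simp [QE, hr]

theorem QE_radialVelocity : QE ρE vE EE r 1 / QE ρE vE EE r 0 = 0 := by
  simp [QE]

theorem QE_azimuthalVelocity (hr : r ≠ 0) (hρ : ρE r ≠ 0) :
    QE ρE vE EE r 2 / QE ρE vE EE r 0 = vE r := by
  simp only [QE, Matrix.cons_val, Matrix.cons_val_zero]
  field_simp

theorem presQ_QE (γ : ℝ) (hr : r ≠ 0) (hρ : ρE r ≠ 0) :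
    presQ γ (QE ρE vE EE r) = presE γ ρE vE EE r := by
  simp only [presQ, presE, QE, Matrix.cons_val, Matrix.cons_val_zero, Matrix.cons_val_one]
  field_simp
  ring

theorem fQ_QE (γ : ℝ) : fQ γ (QE ρE vE EE r) = 0 := by
  funext k
  fin_cases k <;> simp [fQ, QE]

end Equilibrium

theorem wb_reconstruction_reproduces_equilibrium
    (γ G ms : ℝ)
    (ρE vE EE : ℝ → ℝ) (hρE : ∀ x : ℝ, 0 < ρE x)
    (ri Δr tn : ℝ) (hri : 0 < ri) (hΔr : 0 < Δr) (hpos : 0 < ri - Δr)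
    (Qm Qi Qp : Fin 5 → ℝ)
    (hm : Qm = QE ρE vE EE (ri - Δr))
    (hi : Qi = QE ρE vE EE ri)
    (hp : Qp = QE ρE vE EE (ri + Δr)) :
    -- fluctuations relative to the stationary solution
    let Qfm := Qm - QE ρE vE EE (ri - Δr)
    let Qfi := Qi - QE ρE vE EE ri
    let Qfp := Qp - QE ρE vE EE (ri + Δr)
    -- minmod-limited slope of the fluctuations
    let slope : Fin 5 → ℝ := fun k => minmod (Qfi k - Qfm k) (Qfp k - Qfi k)
    -- boundary-extrapolated values q^{n,+}_{i-1/2}, q^{n,-}_{i+1/2}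
    let qL := QE ρE vE EE (ri - Δr / 2) + Qfi - (1 / 2 : ℝ) • slope
    let qR := QE ρE vE EE (ri + Δr / 2) + Qfi + (1 / 2 : ℝ) • slope
    -- primitive cell values
    let ρi := Qi 0 / Qi 4
    let ui := Qi 1 / Qi 0
    let vi := Qi 2 / Qi 0
    -- components of B_i
    let b2 := ri * ((presQ γ qR - presE γ ρE vE EE (ri + Δr / 2))
        - (presQ γ qL - presE γ ρE vE EE (ri - Δr / 2)))
      + ri * ρE ri * (((vE ri) ^ 2 - vi ^ 2) / ri)
      + ri * (ρi - ρE ri) * (G * ms / ri ^ 2 - vi ^ 2 / ri)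
    let b3 := ρi * ui * vi
    let b4 := ρi * ui * (G * ms / ri)
    let Bi : Fin 5 → ℝ := ![0, b2, b3, b4, 0]
    -- discrete time derivative
    let dtQ := -(Δr)⁻¹ • (fQ γ qR - fQ γ qL) - (Δr)⁻¹ • Bi
    Qfm = 0 ∧ Qfi = 0 ∧ Qfp = 0 ∧ slope = 0 ∧ dtQ = 0 ∧
    (∀ r' t : ℝ,
      QE ρE vE EE r' + Qfi + ((r' - ri) / Δr) • slope + (t - tn) • dtQ
        = QE ρE vE EE r') := by
  subst hm hi hp
  intro Qfm Qfi Qfp slope qL qR ρi ui vi b2 b3 b4 Bi dtQ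
  have hQfm : Qfm = 0 := sub_self _
  have hQfi : Qfi = 0 := sub_self _
  have hQfp : Qfp = 0 := sub_self _
  have hslope : slope = 0 := funext fun k => by
    simp [slope, hQfm, hQfi, hQfp, minmod_zero_left]
  have hqL : qL = QE ρE vE EE (ri - Δr / 2) := by simp [qL, hQfi, hslope]
  have hqR : qR = QE ρE vE EE (ri + Δr / 2) := by simp [qR, hQfi, hslope]
  have hL : ri - Δr / 2 ≠ 0 := by linarith
  have hR : ri + Δr / 2 ≠ 0 := by linarith
  have hb2 : b2 = 0 := by
    simp only [b2, ρi, vi, hqL, hqR, presQ_QE ρE vE EE γ hL (hρE _).ne',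
      presQ_QE ρE vE EE γ hR (hρE _).ne', QE_density ρE vE EE hri.ne',
      QE_azimuthalVelocity ρE vE EE hri.ne' (hρE ri).ne']
    ring
  have hui : ui = 0 := QE_radialVelocity ρE vE EE
  have hBi : Bi = 0 := by
    funext k
    fin_cases k <;> simp [Bi, b3, b4, hb2, hui]
  have hdtQ : dtQ = 0 := by simp [dtQ, hqL, hqR, fQ_QE, hBi]
  exact ⟨hQfm, hQfi, hQfp, hslope, hdtQ, fun r' t => by simp [hQfi, hslope, hdtQ]⟩
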